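/- Let n ≥ 3 and let C be a relative interaction matrix having star topology with center node 1. Then for every initial condition x(0) ∈ Δⁿ \ {e_1, …, e_n}, the iterates x(t+1) = F(x(t)) of the single-timescale DeGroot–Friedkin map converge asymptotically to the autocratic configuration e_1 as t → ∞. -/
import Mathlib


/-- The simplex Δⁿ = {x ∈ ℝⁿ : xᵢ ≥ 0, ∑ᵢ xᵢ = 1}. -/
def simplex (n : ℕ) : Set (Fin n → ℝ) :=
  {x | (∀ i, 0 ≤ x i) ∧ ∑ i, x i = 1}

/-- The i-th vertex (standard basis vector) of the simplex. -/
def vertex (n : ℕ) (i : Fin n) : Fin n → ℝ := fun j => if j = i then 1 else 0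

/-- A relative interaction matrix: nonnegative, row-stochastic, zero diagonal. -/
def IsRIM {n : ℕ} (C : Matrix (Fin n) (Fin n) ℝ) : Prop :=
  (∀ i j, 0 ≤ C i j) ∧ (∀ i, ∑ j, C i j = 1) ∧ (∀ i, C i i = 0)

/-- The single-timescale DeGroot–Friedkin map F(x) = Cᵀ(x − x²) + x². -/
noncomputable def DF {n : ℕ} (C : Matrix (Fin n) (Fin n) ℝ) (x : Fin n → ℝ) : Fin n → ℝ :=
  fun i => ∑ j, C j i * (x j - (x j) ^ 2) + (x i) ^ 2

/-- C has star topology with center node c: C_{jc} = 1 and C_{cj} > 0 for all j ≠ c. -/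
def StarCenter {n : ℕ} (C : Matrix (Fin n) (Fin n) ℝ) (c : Fin n) : Prop :=
  (∀ j, j ≠ c → C j c = 1) ∧ (∀ j, j ≠ c → 0 < C c j)

open Finset Filter

lemma x_le_one' {n : ℕ} {x : Fin n → ℝ} (hx : x ∈ simplex n) (i : Fin n) : x i ≤ 1 := by
  obtain ⟨h0, h1⟩ := hx
  calc x i ≤ ∑ j, x j := Finset.single_le_sum (fun j _ => h0 j) (Finset.mem_univ i)
    _ = 1 := h1

lemma rim_off' {n : ℕ} {C : Matrix (Fin n) (Fin n) ℝ} (hC : IsRIM C) {z : Fin n}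
    (hz : ∀ j, j ≠ z → C j z = 1) {j i : Fin n} (hj : j ≠ z) (hi : i ≠ z) :
    C j i = 0 := by
  have hsum := hC.2.1 j
  have hadd := Finset.add_sum_erase Finset.univ (C j) (Finset.mem_univ z)
  have h1 : ∑ k ∈ Finset.univ.erase z, C j k = 0 := by
    have := hz j hj; linarith
  exact (Finset.sum_eq_zero_iff_of_nonneg (fun k _ => hC.1 j k)).mp h1 i
    (Finset.mem_erase.mpr ⟨hi, Finset.mem_univ i⟩)

lemma DF_center' {n : ℕ} {C : Matrix (Fin n) (Fin n) ℝ} (hC : IsRIM C) {z : Fin n}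
    (hz : ∀ j, j ≠ z → C j z = 1) (x : Fin n → ℝ) :
    DF C x z = ∑ j ∈ Finset.univ.erase z, (x j - (x j) ^ 2) + (x z) ^ 2 := by
  unfold DF
  congr 1
  rw [← Finset.add_sum_erase Finset.univ _ (Finset.mem_univ z), hC.2.2 z, zero_mul, zero_add]
  exact Finset.sum_congr rfl (fun j hj => by
    rw [hz j (Finset.mem_erase.mp hj).1, one_mul])

lemma DF_leaf' {n : ℕ} {C : Matrix (Fin n) (Fin n) ℝ} (hC : IsRIM C) {z : Fin n}
    (hz : ∀ j, j ≠ z → C j z = 1) {i : Fin n} (hi : i ≠ z) (x : Fin n → ℝ) :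
    DF C x i = C z i * (x z - (x z) ^ 2) + (x i) ^ 2 := by
  unfold DF
  congr 1
  rw [← Finset.add_sum_erase Finset.univ _ (Finset.mem_univ z)]
  rw [Finset.sum_eq_zero (fun j hj => by
    rw [rim_off' hC hz (Finset.mem_erase.mp hj).1 hi, zero_mul]), add_zero]

lemma DF_mem' {n : ℕ} {C : Matrix (Fin n) (Fin n) ℝ} (hC : IsRIM C) {x : Fin n → ℝ}
    (hx : x ∈ simplex n) : DF C x ∈ simplex n := by
  constructor
  · intro i
    have h1 : 0 ≤ ∑ j, C j i * (x j - (x j) ^ 2) :=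
      Finset.sum_nonneg (fun j _ => mul_nonneg (hC.1 j i)
        (by nlinarith [hx.1 j, x_le_one' hx j]))
    have h2 := sq_nonneg (x i)
    show 0 ≤ ∑ j, C j i * (x j - (x j) ^ 2) + (x i) ^ 2
    linarith
  · show ∑ i, (∑ j, C j i * (x j - (x j) ^ 2) + (x i) ^ 2) = 1
    rw [Finset.sum_add_distrib]
    have h3 : ∑ i, ∑ j, C j i * (x j - (x j) ^ 2) = ∑ j, (x j - (x j) ^ 2) := by
      rw [Finset.sum_comm]
      refine Finset.sum_congr rfl (fun j _ => ?_)
      rw [← Finset.sum_mul, hC.2.1 j, one_mul]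
    rw [h3, Finset.sum_sub_distrib]
    have := hx.2
    linarith

-- increment identity
lemma DF_center_eq' {n : ℕ} {C : Matrix (Fin n) (Fin n) ℝ} (hC : IsRIM C) {z : Fin n}
    (hz : ∀ j, j ≠ z → C j z = 1) {x : Fin n → ℝ} (hx : x ∈ simplex n) :
    DF C x z = x z + ((∑ j ∈ Finset.univ.erase z, x j) ^ 2
      - ∑ j ∈ Finset.univ.erase z, (x j) ^ 2) := by
  have hT : ∑ j ∈ Finset.univ.erase z, x j = 1 - x z := by
    have := Finset.add_sum_erase Finset.univ x (Finset.mem_univ z)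
    have h2 := hx.2
    linarith
  rw [DF_center' hC hz, Finset.sum_sub_distrib, hT]
  ring

lemma T_sub_nonneg {n : ℕ} {x : Fin n → ℝ} (hx : x ∈ simplex n) {z j : Fin n}
    (hj : j ∈ Finset.univ.erase z) :
    x j ≤ ∑ a ∈ Finset.univ.erase z, x a :=
  Finset.single_le_sum (fun a _ => hx.1 a) hj

lemma center_mono' {n : ℕ} {C : Matrix (Fin n) (Fin n) ℝ} (hC : IsRIM C) {z : Fin n}
    (hz : ∀ j, j ≠ z → C j z = 1) {x : Fin n → ℝ} (hx : x ∈ simplex n) :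
    x z ≤ DF C x z := by
  rw [DF_center_eq' hC hz hx]
  have hS : ∑ j ∈ Finset.univ.erase z, (x j) ^ 2
      ≤ (∑ j ∈ Finset.univ.erase z, x j) ^ 2 := by
    have h1 : ∑ j ∈ Finset.univ.erase z, (x j) ^ 2
        ≤ ∑ j ∈ Finset.univ.erase z, x j * (∑ a ∈ Finset.univ.erase z, x a) :=
      Finset.sum_le_sum (fun j hj => by nlinarith [hx.1 j, T_sub_nonneg hx hj])
    rw [← Finset.sum_mul] at h1
    nlinarith [h1]
  linarith

lemma center_gap' {n : ℕ} {C : Matrix (Fin n) (Fin n) ℝ} (hC : IsRIM C) {z : Fin n}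
    (hz : ∀ j, j ≠ z → C j z = 1) {x : Fin n → ℝ} (hx : x ∈ simplex n)
    {j k : Fin n} (hj : j ≠ z) (hk : k ≠ z) (hjk : j ≠ k) :
    x z + x j * x k ≤ DF C x z := by
  rw [DF_center_eq' hC hz hx]
  have hjm : j ∈ Finset.univ.erase z := Finset.mem_erase.mpr ⟨hj, Finset.mem_univ j⟩
  have hkm : k ∈ Finset.univ.erase z := Finset.mem_erase.mpr ⟨hk, Finset.mem_univ k⟩
  set T := ∑ a ∈ Finset.univ.erase z, x a with hT
  have key : T ^ 2 - ∑ a ∈ Finset.univ.erase z, (x a) ^ 2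
      = ∑ a ∈ Finset.univ.erase z, x a * (T - x a) := by
    have : ∀ a ∈ Finset.univ.erase z, x a * (T - x a) = x a * T - (x a) ^ 2 := by
      intro a _; ring
    rw [Finset.sum_congr rfl this, Finset.sum_sub_distrib, ← Finset.sum_mul, ← hT]
    ring
  have h1 : x j * (T - x j) ≤ ∑ a ∈ Finset.univ.erase z, x a * (T - x a) :=
    Finset.single_le_sum (f := fun a => x a * (T - x a)) (fun a ha => mul_nonneg (hx.1 a)
      (by linarith [T_sub_nonneg hx ha])) hjm
  have h2 : x k ≤ T - x j := by
    have hkm2 : k ∈ (Finset.univ.erase z).erase j :=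
      Finset.mem_erase.mpr ⟨Ne.symm hjk, hkm⟩
    have h3 : x k ≤ ∑ a ∈ (Finset.univ.erase z).erase j, x a :=
      Finset.single_le_sum (fun a _ => hx.1 a) hkm2
    have h4 := Finset.add_sum_erase _ x hjm
    rw [hT]; linarith
  have h5 : x j * x k ≤ x j * (T - x j) :=
    mul_le_mul_of_nonneg_left h2 (hx.1 j)
  linarith [key ▸ (le_trans h5 h1)]

lemma DF_center_pos' {n : ℕ} {C : Matrix (Fin n) (Fin n) ℝ} (hC : IsRIM C) {z : Fin n}
    (hz : ∀ j, j ≠ z → C j z = 1) {x : Fin n → ℝ} (hx : x ∈ simplex n)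
    (hv : ∀ i, x ≠ vertex n i) : 0 < DF C x z := by
  rw [DF_center' hC hz]
  by_contra h
  push_neg at h
  have hterm : ∀ j ∈ Finset.univ.erase z, 0 ≤ x j - (x j) ^ 2 :=
    fun j _ => by nlinarith [hx.1 j, x_le_one' hx j]
  have hS : 0 ≤ ∑ j ∈ Finset.univ.erase z, (x j - (x j) ^ 2) :=
    Finset.sum_nonneg hterm
  have hz2 : x z = 0 := by nlinarith [sq_nonneg (x z)]
  have hsum0 : ∑ j ∈ Finset.univ.erase z, (x j - (x j) ^ 2) = 0 := by
    nlinarith [sq_nonneg (x z)]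
  have heach : ∀ j ∈ Finset.univ.erase z, x j - (x j) ^ 2 = 0 :=
    (Finset.sum_eq_zero_iff_of_nonneg hterm).mp hsum0
  have hTsum : ∑ j ∈ Finset.univ.erase z, x j = 1 := by
    have := Finset.add_sum_erase Finset.univ x (Finset.mem_univ z)
    have h2 := hx.2
    linarith
  obtain ⟨j, hjm, hjpos⟩ : ∃ j ∈ Finset.univ.erase z, 0 < x j := by
    by_contra h'
    push_neg at h'
    have : ∑ j ∈ Finset.univ.erase z, x j = 0 :=
      Finset.sum_eq_zero (fun j hj => le_antisymm (h' j hj) (hx.1 j))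
    linarith
  have hj1 : x j = 1 := by
    have := heach j hjm
    nlinarith
  refine hv j (funext fun k => ?_)
  unfold vertex
  by_cases hk : k = j
  · simp [hk, hj1]
  · simp only [hk, if_false]
    have h4 := Finset.add_sum_erase Finset.univ x (Finset.mem_univ j)
    have h5 : ∑ m ∈ Finset.univ.erase j, x m = 0 := by
      have h2 := hx.2; linarith
    exact (Finset.sum_eq_zero_iff_of_nonneg (fun m _ => hx.1 m)).mp h5 k
      (Finset.mem_erase.mpr ⟨hk, Finset.mem_univ k⟩)

theorem stmt2 {n : ℕ} (hn : 3 ≤ n) (C : Matrix (Fin n) (Fin n) ℝ) (hC : IsRIM C)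
    (hstar : StarCenter C ⟨0, by omega⟩)
    (x : ℕ → Fin n → ℝ) (hx0 : x 0 ∈ simplex n) (hx0v : ∀ i, x 0 ≠ vertex n i)
    (hrec : ∀ t, x (t + 1) = DF C (x t)) :
    Filter.Tendsto x Filter.atTop (nhds (vertex n ⟨0, by omega⟩)) := by
  have hn0 : 0 < n := by omega
  set z : Fin n := ⟨0, by omega⟩ with hzdef
  have hz1 : ∀ j, j ≠ z → C j z = 1 := hstar.1
  have hz2 : ∀ j, j ≠ z → 0 < C z j := hstar.2
  have hsim : ∀ t, x t ∈ simplex n := by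
    intro t
    induction t with
    | zero => exact hx0
    | succ t ih => rw [hrec t]; exact DF_mem' hC ih
  have hmono : Monotone (fun t => x t z) := by
    apply monotone_nat_of_le_succ
    intro t
    show x t z ≤ x (t+1) z
    rw [hrec t]
    exact center_mono' hC hz1 (hsim t)
  have hle1 : ∀ t, x t z ≤ 1 := fun t => x_le_one' (hsim t) z
  have hy0 : ∀ t, 0 ≤ x t z := fun t => (hsim t).1 z
  have hy1pos : 0 < x 1 z := by
    rw [hrec 0]; exact DF_center_pos' hC hz1 hx0 hx0v
  have hbdd : BddAbove (Set.range fun t => x t z) := by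
    refine ⟨1, ?_⟩
    rintro _ ⟨t, rfl⟩
    exact hle1 t
  set L := ⨆ t, x t z with hL
  have htendy : Tendsto (fun t => x t z) atTop (nhds L) := tendsto_atTop_ciSup hmono hbdd
  have hLle : L ≤ 1 := ciSup_le hle1
  have hyleL : ∀ t, x t z ≤ L := fun t => le_ciSup hbdd t
  have hL1 : L = 1 := by
    by_contra hne
    have hLlt : L < 1 := lt_of_le_of_ne hLle hne
    set η := x 1 z * (1 - L) with hη
    have hηpos : 0 < η := mul_pos hy1pos (by linarith)
    have h1n : (1 : ℕ) < n := by omega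
    have h2n : (2 : ℕ) < n := by omega
    set j₁ : Fin n := ⟨1, h1n⟩ with hj₁def
    set j₂ : Fin n := ⟨2, h2n⟩ with hj₂def
    have hj₁z : j₁ ≠ z := by simp [hj₁def, hzdef, Fin.ext_iff]
    have hj₂z : j₂ ≠ z := by simp [hj₂def, hzdef, Fin.ext_iff]
    have hj₁₂ : j₁ ≠ j₂ := by simp [hj₁def, hj₂def, Fin.ext_iff]
    set c := min (C z j₁) (C z j₂) with hc
    have hcpos : 0 < c := lt_min (hz2 j₁ hj₁z) (hz2 j₂ hj₂z)
    -- coordinate lower bound for t ≥ 2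
    have hlow : ∀ t, 1 ≤ t → ∀ i, i ≠ z → c ≤ C z i → c * η ≤ x (t + 1) i := by
      intro t ht i hi hci
      rw [hrec t, DF_leaf' hC hz1 hi]
      have h1 : x 1 z ≤ x t z := hmono ht
      have h2 : x t z ≤ L := hyleL t
      have h3 : 0 ≤ x t z := hy0 t
      have h4 : η ≤ x t z * (1 - x t z) := by nlinarith
      have h5 : 0 ≤ C z i := hC.1 z i
      nlinarith [sq_nonneg (x t i)]
    have hstep : ∀ t, 2 ≤ t → x t z + (c * η) ^ 2 ≤ x (t + 1) z := by
      intro t ht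
      obtain ⟨s, rfl⟩ : ∃ s, t = s + 1 := ⟨t - 1, by omega⟩
      have hs1 : 1 ≤ s := by omega
      have hb1 : c * η ≤ x (s + 1) j₁ := hlow s hs1 j₁ hj₁z (min_le_left _ _)
      have hb2 : c * η ≤ x (s + 1) j₂ := hlow s hs1 j₂ hj₂z (min_le_right _ _)
      have hgap := center_gap' hC hz1 (hsim (s + 1)) hj₁z hj₂z hj₁₂
      rw [← hrec (s + 1)] at hgap
      have hcη : 0 ≤ c * η := le_of_lt (mul_pos hcpos hηpos)
      nlinarith
    have hgrow : ∀ k : ℕ, x 2 z + k * (c * η) ^ 2 ≤ x (2 + k) z := by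
      intro k
      induction k with
      | zero => simp
      | succ k ih =>
        have := hstep (2 + k) (by omega)
        push_cast
        have : x (2 + k) z + (c * η) ^ 2 ≤ x (2 + k + 1) z := hstep (2 + k) (by omega)
        have heq : 2 + (k + 1) = (2 + k) + 1 := by omega
        rw [heq]
        push_cast at ih ⊢
        linarith
    have hεpos : 0 < (c * η) ^ 2 := by positivity
    obtain ⟨k, hk⟩ := exists_nat_gt (((c * η) ^ 2)⁻¹)
    have hk1 : 1 < (k : ℝ) * (c * η) ^ 2 := by
      rw [← div_lt_iff₀ hεpos] at *
      calc (1 : ℝ) / (c * η) ^ 2 = ((c * η) ^ 2)⁻¹ := one_div _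
        _ < k := hk
    have h02 : 0 ≤ x 2 z := hy0 2
    have := hgrow k
    have hcontra := hle1 (2 + k)
    have hy2 : x 1 z ≤ x 2 z := hmono (by omega)
    linarith
  -- final convergence
  rw [tendsto_pi_nhds]
  intro i
  by_cases hi : i = z
  · rw [hi]
    have hv : vertex n z z = 1 := by simp [vertex]
    rw [hv]
    exact hL1 ▸ htendy
  · have hv0 : vertex n z i = 0 := by simp [vertex, hi]
    rw [hv0]
    apply squeeze_zero (fun t => (hsim t).1 i) (g := fun t => 1 - x t z)
    · intro t
      have h2 : x t i ≤ ∑ j ∈ Finset.univ.erase z, x t j :=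
        Finset.single_le_sum (fun j _ => (hsim t).1 j)
          (Finset.mem_erase.mpr ⟨hi, Finset.mem_univ i⟩)
      have h3 := Finset.add_sum_erase Finset.univ (x t) (Finset.mem_univ z)
      have h4 := (hsim t).2
      linarith
    · have : Tendsto (fun t => 1 - x t z) atTop (nhds (1 - L)) :=
        tendsto_const_nhds.sub htendy
      rw [hL1] at this
      simpa using this
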